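/- arXiv:2507.20544 — 6 statements merged into one kernel-verified Lean document; each statement's English description precedes it below -/
import Mathlib

section
/- For all real u with 0 < u ≤ 1/6, one has (log(2 sin(πu)))² ≤ (log(6u))². -/
open Real

theorem log_sq_two_sin_le_log_sq_six (u : ℝ) (h0 : 0 < u) (h1 : u ≤ 1/6) :
    (Real.log (2 * Real.sin (π * u)))^2 ≤ (Real.log (6 * u))^2 := by
  have hpi := Real.pi_pos
  have h6u : 0 < 6 * u := by linarith
  have h6u1 : 6 * u ≤ 1 := by linarith
  -- lower bound: sin (π u) ≥ 3 u by concavity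
  have hc := strictConcaveOn_sin_Icc.concaveOn
  have hmem0 : (0:ℝ) ∈ Set.Icc (0:ℝ) π := by constructor <;> linarith
  have hmem6 : (π/6 : ℝ) ∈ Set.Icc (0:ℝ) π := by constructor <;> linarith
  have key := hc.2 hmem0 hmem6 (show (0:ℝ) ≤ 1 - 6*u by linarith) (show (0:ℝ) ≤ 6*u by linarith) (show (1 - 6*u) + 6*u = 1 by ring)
  rw [Real.sin_pi_div_six] at key
  simp only [smul_eq_mul, Real.sin_zero] at key
  have hsin_lb : 3 * u ≤ Real.sin (π * u) := by
    have : (1 - 6*u) * 0 + 6*u * (π/6) = π * u := by ring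
    rw [this] at key
    linarith
  -- upper bound: sin (π u) ≤ 1/2 by monotonicity
  have hsin_ub : Real.sin (π * u) ≤ 1/2 := by
    have := Real.sin_le_sin_of_le_of_le_pi_div_two (x := π * u) (y := π/6)
      (by nlinarith) (by linarith) (by nlinarith)
    rwa [Real.sin_pi_div_six] at this
  have hA : 0 < 2 * Real.sin (π * u) := by nlinarith
  have hlog1 : Real.log (6 * u) ≤ Real.log (2 * Real.sin (π * u)) :=
    Real.log_le_log (by linarith) (by linarith)
  have hlog2 : Real.log (2 * Real.sin (π * u)) ≤ 0 :=
    Real.log_nonpos (by linarith) (by linarith)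
  have habs : |Real.log (2 * Real.sin (π * u))| ≤ |Real.log (6 * u)| := by
    rw [abs_of_nonpos hlog2, abs_of_nonpos (by linarith)]
    linarith
  calc (Real.log (2 * Real.sin (π * u)))^2 = |Real.log (2 * Real.sin (π * u))|^2 := (sq_abs _).symm
    _ ≤ |Real.log (6 * u)|^2 := pow_le_pow_left₀ (abs_nonneg _) habs 2
    _ = (Real.log (6 * u))^2 := sq_abs _
end

section
/- For all real u with 1/6 ≤ u ≤ 1/2, one has (log(2 sin(πu)))² ≤ (log(2πu))². -/
open Real

theorem log_sq_two_sin_le_log_sq_two_pi (u : ℝ) (h0 : 1/6 ≤ u) (h1 : u ≤ 1/2) :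
    (Real.log (2 * Real.sin (π * u)))^2 ≤ (Real.log (2 * π * u))^2 := by
  have hpi := Real.pi_gt_three
  have hsin : (1:ℝ)/2 ≤ Real.sin (π * u) := by
    have := Real.sin_le_sin_of_le_of_le_pi_div_two (x := π/6) (y := π * u)
      (by nlinarith) (by nlinarith) (by nlinarith)
    rwa [Real.sin_pi_div_six] at this
  have h1le : (1:ℝ) ≤ 2 * Real.sin (π * u) := by linarith
  have hlog0 : 0 ≤ Real.log (2 * Real.sin (π * u)) := Real.log_nonneg h1le
  have hle : Real.log (2 * Real.sin (π * u)) ≤ Real.log (2 * π * u) := by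
    apply Real.log_le_log (by linarith)
    have hsx : Real.sin (π * u) ≤ π * u := Real.sin_le (by nlinarith)
    nlinarith
  calc (Real.log (2 * Real.sin (π * u)))^2 ≤ (Real.log (2 * π * u))^2 :=
    pow_le_pow_left₀ hlog0 hle 2
end

section
/- For every integer m > 1, m times the integral of (log(2 sin(πu)))² over u from 0 to 1/m is at most 2.2 + (log m)². -/
/-!
By Jordan's inequality `2u ≤ sin (π u) ≤ π u` for `0 ≤ u ≤ 1/2`, the number
`log (2 sin (π u))` lies between `log (4u)` and `log π`, so its square is at most
`log (4u)² + log π²`. The first term integrates in closed form through the primitive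
`x (log² x - 2 log x + 2)` of `log² x`, and the resulting bound
`(log m - 2 log 2)² + 2 (log m - 2 log 2) + 2 + log² π` is at most `2.2 + log² m`
because `log 2 > 1/2` and `log π < 1.2`.
-/

open Real MeasureTheory Set Filter Topology intervalIntegral

lemma sq_le_sq_add_sq_of_le_of_le {a b c : ℝ} (hab : a ≤ b) (hbc : b ≤ c) :
    b ^ 2 ≤ a ^ 2 + c ^ 2 := by
  rcases le_total 0 b with hb | hb <;> nlinarith

lemma log_pi_lt_d1 : log π < 1.2 := by
  rw [log_lt_iff_lt_exp pi_pos, show (1.2 : ℝ) = 1 + 0.2 by norm_num, exp_add]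
  nlinarith [pi_lt_d2, exp_one_gt_d9, add_one_le_exp (0.2 : ℝ)]

lemma hasDerivAt_mul_log_sq_sub_two_mul_log_add_two {x : ℝ} (hx : x ≠ 0) :
    HasDerivAt (fun x => x * (log x ^ 2 - 2 * log x + 2)) (log x ^ 2) x := by
  have hlog := hasDerivAt_log hx
  refine ((hasDerivAt_id' x).fun_mul
    (((hlog.fun_pow 2).fun_sub (hlog.const_mul 2)).add_const 2)).congr_deriv ?_
  field_simp
  ring

lemma tendsto_mul_log_sq_nhdsGT_zero : Tendsto (fun x => x * log x ^ 2) (𝓝[>] 0) (𝓝 0) := by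
  have h := (tendsto_log_mul_rpow_nhdsGT_zero (r := 1 / 2) (by norm_num)).pow 2
  rw [zero_pow two_ne_zero] at h
  refine h.congr' ?_
  filter_upwards [self_mem_nhdsWithin] with x (hx : 0 < x)
  rw [mul_pow, ← rpow_mul_natCast hx.le]
  norm_num
  ring

lemma continuousOn_mul_log_sq_sub_two_mul_log_add_two :
    ContinuousOn (fun x => x * (log x ^ 2 - 2 * log x + 2)) (Ici 0) := by
  intro x hx
  rcases (mem_Ici.1 hx).eq_or_lt with rfl | hx0
  · rw [← continuousWithinAt_Ioi_iff_Ici, ContinuousWithinAt]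
    have h := (tendsto_mul_log_sq_nhdsGT_zero.sub
      (((continuous_mul_log.tendsto 0).mono_left nhdsWithin_le_nhds).const_mul 2)).add
      (((continuous_id.tendsto 0).mono_left nhdsWithin_le_nhds).const_mul 2)
    simp only [log_zero, mul_zero, sub_zero, zero_mul, add_zero, id] at h ⊢
    refine h.congr fun x => by ring
  · exact (((continuousAt_log hx0.ne').pow 2).sub ((continuousAt_log hx0.ne').const_mul 2)
      |>.add continuousAt_const |> continuousAt_id.mul).continuousWithinAt

lemma intervalIntegrable_log_sq {b : ℝ} (hb : 0 ≤ b) :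
    IntervalIntegrable (fun x => log x ^ 2) volume 0 b := by
  refine intervalIntegrable_deriv_of_nonneg
    (continuousOn_mul_log_sq_sub_two_mul_log_add_two.mono
      (by simp [uIcc_of_le hb, Icc_subset_Ici_self]))
    (fun x hx => hasDerivAt_mul_log_sq_sub_two_mul_log_add_two ?_) (fun x _ => sq_nonneg _)
  simp only [hb, min_eq_left, max_eq_right] at hx
  exact hx.1.ne'

theorem integral_log_sq {b : ℝ} (hb : 0 ≤ b) :
    ∫ x in 0..b, log x ^ 2 = b * (log b ^ 2 - 2 * log b + 2) := by
  rw [integral_eq_sub_of_hasDerivAt_of_le hb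
    (continuousOn_mul_log_sq_sub_two_mul_log_add_two.mono Icc_subset_Ici_self)
    (fun x hx => hasDerivAt_mul_log_sq_sub_two_mul_log_add_two hx.1.ne')
    (intervalIntegrable_log_sq hb)]
  simp

lemma intervalIntegrable_log_const_mul_sq {b c : ℝ} (hb : 0 ≤ b) (hc : 0 < c) :
    IntervalIntegrable (fun x => log (c * x) ^ 2) volume 0 b := by
  simpa [hc.ne'] using (intervalIntegrable_log_sq (mul_nonneg hc.le hb)).comp_mul_left (c := c)

theorem integral_log_const_mul_sq {b c : ℝ} (hb : 0 ≤ b) (hc : 0 < c) :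
    ∫ x in 0..b, log (c * x) ^ 2 = b * (log (c * b) ^ 2 - 2 * log (c * b) + 2) := by
  rw [integral_comp_mul_left (fun x => log x ^ 2) hc.ne', mul_zero,
    integral_log_sq (mul_nonneg hc.le hb), smul_eq_mul]
  field_simp

lemma log_two_mul_sin_pi_mul_sq_le {u : ℝ} (hu0 : 0 < u) (hu : u ≤ 1 / 2) :
    log (2 * sin (π * u)) ^ 2 ≤ log (4 * u) ^ 2 + log π ^ 2 := by
  have hπu : 0 ≤ π * u := by positivity
  have hsin_ge : 2 * u ≤ sin (π * u) := by
    calc 2 * u = 2 / π * (π * u) := by field_simp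
      _ ≤ sin (π * u) := mul_le_sin hπu (by nlinarith [pi_pos])
  have hsin_le : sin (π * u) ≤ π * u := sin_le hπu
  refine sq_le_sq_add_sq_of_le_of_le (log_le_log (by positivity) (by linarith)) ?_
  calc log (2 * sin (π * u)) ≤ log (2 * (π * u)) := log_le_log (by linarith) (by linarith)
    _ ≤ log π := log_le_log (by positivity) (by nlinarith [pi_pos])

theorem integral_log_two_mul_sin_pi_mul_sq_le {b : ℝ} (hb0 : 0 < b) (hb : b ≤ 1 / 2) :
    ∫ u in 0..b, log (2 * sin (π * u)) ^ 2
      ≤ b * (log (4 * b) ^ 2 - 2 * log (4 * b) + 2 + log π ^ 2) := by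
  have hint : IntervalIntegrable (fun u => log (4 * u) ^ 2 + log π ^ 2) volume 0 b :=
    (intervalIntegrable_log_const_mul_sq hb0.le four_pos).add intervalIntegrable_const
  calc ∫ u in 0..b, log (2 * sin (π * u)) ^ 2
      ≤ ∫ u in 0..b, (log (4 * u) ^ 2 + log π ^ 2) := by
        rw [integral_of_le hb0.le, integral_of_le hb0.le]
        refine integral_mono_of_nonneg (ae_of_all _ fun _ => sq_nonneg _) hint.1 ?_
        exact (ae_restrict_mem measurableSet_Ioc).mono fun u hu =>
          log_two_mul_sin_pi_mul_sq_le hu.1 (hu.2.trans hb)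
    _ = b * (log (4 * b) ^ 2 - 2 * log (4 * b) + 2 + log π ^ 2) := by
        rw [integral_add (intervalIntegrable_log_const_mul_sq hb0.le four_pos)
          intervalIntegrable_const, integral_log_const_mul_sq hb0.le four_pos,
          intervalIntegral.integral_const]
        simp only [sub_zero, smul_eq_mul]
        ring

theorem mul_integral_log_sq_two_sin_le (m : ℕ) (hm : 1 < m) :
    (m : ℝ) * ∫ u in (0:ℝ)..(1/m), (Real.log (2 * Real.sin (π * u)))^2
      ≤ 2.2 + (Real.log m)^2 := by
  have hm2 : (2 : ℝ) ≤ m := by exact_mod_cast hm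
  have hm0 : (0 : ℝ) < m := by linarith
  have hlog : log (4 * (1 / m)) = 2 * log 2 - log m := by
    rw [← div_eq_mul_one_div, log_div four_ne_zero hm0.ne',
      show (4 : ℝ) = 2 ^ 2 by norm_num, log_pow, Nat.cast_ofNat]
  have hlog_m : log 2 ≤ log m := log_le_log two_pos hm2
  calc (m : ℝ) * ∫ u in (0:ℝ)..(1/m), log (2 * sin (π * u)) ^ 2
      ≤ m * (1 / m * (log (4 * (1 / m)) ^ 2 - 2 * log (4 * (1 / m)) + 2 + log π ^ 2)) :=
        mul_le_mul_of_nonneg_left (integral_log_two_mul_sin_pi_mul_sq_le (by positivity)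
          (one_div_le_one_div_of_le two_pos hm2)) hm0.le
    _ = (2 * log 2 - log m) ^ 2 - 2 * (2 * log 2 - log m) + 2 + log π ^ 2 := by
        rw [hlog]
        field_simp
    _ ≤ 2.2 + log m ^ 2 := by
        -- the coefficient `2 - 4 log 2` of `log m` is negative, so `m = 2` is the worst case
        nlinarith [log_two_gt_d9, log_pi_lt_d1, log_nonneg (one_le_two.trans two_le_pi),
          mul_nonneg (sub_nonneg.2 hlog_m) (sub_nonneg.2 log_two_gt_d9.le)]
end

section
/- If n is a positive integer with exactly s distinct prime factors, then Euler's totient φ(n) satisfies φ(n) ≤ n·(1 − n^{−1/s})^s. -/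
open Real

theorem totient_le_of_primeFactors (n s : ℕ) (hn : 0 < n)
    (hs : n.primeFactors.card = s) (hs1 : 1 ≤ s) :
    (Nat.totient n : ℝ) ≤ (n : ℝ) * (1 - (n : ℝ) ^ (-(1 / (s : ℝ)))) ^ s := by
  set P := n.primeFactors with hP
  have hs0 : (s : ℝ) ≠ 0 := by positivity
  have hsne : s ≠ 0 := by omega
  -- Euler's product formula over ℝ
  have htot : (Nat.totient n : ℝ) = n * ∏ p ∈ P, (1 - (p : ℝ)⁻¹) := by
    have := Nat.totient_eq_mul_prod_factors n
    have := congrArg (Rat.cast : ℚ → ℝ) this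
    push_cast at this
    exact this
  have hppos : ∀ p ∈ P, (0:ℝ) < p := fun p hp => by
    exact_mod_cast (Nat.pos_of_mem_primeFactors hp)
  have ha : ∀ p ∈ P, (0:ℝ) ≤ 1 - (p : ℝ)⁻¹ := by
    intro p hp
    have h2 : (2:ℝ) ≤ p := by exact_mod_cast (Nat.prime_of_mem_primeFactors hp).two_le
    have : (p:ℝ)⁻¹ ≤ 1 := by
      rw [inv_le_one_iff₀]; right; linarith
    linarith
  have hw : ∀ p ∈ P, (0:ℝ) ≤ (s:ℝ)⁻¹ := fun _ _ => by positivity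
  have hw' : ∑ _p ∈ P, (s:ℝ)⁻¹ = 1 := by
    rw [Finset.sum_const, hs, nsmul_eq_mul, mul_inv_cancel₀ hs0]
  -- AM-GM for (1 - 1/p)
  have hAM1 : ∏ p ∈ P, (1 - (p:ℝ)⁻¹) ^ ((s:ℝ)⁻¹) ≤ ∑ p ∈ P, (s:ℝ)⁻¹ * (1 - (p:ℝ)⁻¹) :=
    Real.geom_mean_le_arith_mean_weighted P _ _ hw hw' ha
  -- AM-GM for 1/p
  have hAM2 : ∏ p ∈ P, ((p:ℝ)⁻¹) ^ ((s:ℝ)⁻¹) ≤ ∑ p ∈ P, (s:ℝ)⁻¹ * (p:ℝ)⁻¹ :=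
    Real.geom_mean_le_arith_mean_weighted P _ _ hw hw'
      (fun p hp => by positivity)
  have hsum : (∑ p ∈ P, (s:ℝ)⁻¹ * (1 - (p:ℝ)⁻¹)) + ∑ p ∈ P, (s:ℝ)⁻¹ * (p:ℝ)⁻¹ = 1 := by
    rw [← Finset.sum_add_distrib]
    simp only [mul_sub, sub_add_cancel, mul_one]
    exact hw'
  -- the geometric mean of 1/p is at least n^{-1/s}
  have hprodP : (0:ℝ) < ∏ p ∈ P, (p:ℝ) := Finset.prod_pos hppos
  have hGval : ∏ p ∈ P, ((p:ℝ)⁻¹) ^ ((s:ℝ)⁻¹) = (∏ p ∈ P, (p:ℝ)) ^ (-(1/(s:ℝ))) := by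
    rw [Real.finset_prod_rpow P _ (fun p hp => by positivity), Finset.prod_inv_distrib,
      Real.inv_rpow hprodP.le, ← Real.rpow_neg hprodP.le, one_div]
  have hPn : (∏ p ∈ P, (p:ℝ)) ≤ n := by
    have := Nat.prod_primeFactors_dvd n
    have h := Nat.le_of_dvd hn this
    calc (∏ p ∈ P, (p:ℝ)) = ((∏ p ∈ P, p : ℕ) : ℝ) := by push_cast; rfl
      _ ≤ n := by exact_mod_cast h
  have hG : (n:ℝ) ^ (-(1/(s:ℝ))) ≤ ∏ p ∈ P, ((p:ℝ)⁻¹) ^ ((s:ℝ)⁻¹) := by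
    rw [hGval]
    exact Real.rpow_le_rpow_of_nonpos hprodP hPn (neg_nonpos.mpr (by positivity))
  -- combine
  have hkey : ∏ p ∈ P, (1 - (p:ℝ)⁻¹) ^ ((s:ℝ)⁻¹) ≤ 1 - (n:ℝ) ^ (-(1/(s:ℝ))) := by
    have h1 : ∏ p ∈ P, (1 - (p:ℝ)⁻¹) ^ ((s:ℝ)⁻¹) ≤ 1 - ∏ p ∈ P, ((p:ℝ)⁻¹) ^ ((s:ℝ)⁻¹) := by
      linarith
    linarith
  have hfin : ∏ p ∈ P, (1 - (p:ℝ)⁻¹) ≤ (1 - (n:ℝ) ^ (-(1/(s:ℝ)))) ^ s := by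
    have heq : ∏ p ∈ P, (1 - (p:ℝ)⁻¹) = (∏ p ∈ P, (1 - (p:ℝ)⁻¹) ^ ((s:ℝ)⁻¹)) ^ s := by
      rw [Real.finset_prod_rpow P _ ha, Real.rpow_inv_natCast_pow (Finset.prod_nonneg ha) hsne]
    rw [heq]
    exact pow_le_pow_left₀ (Finset.prod_nonneg fun p hp => Real.rpow_nonneg (ha p hp) _)
      hkey s
  rw [htot]
  exact mul_le_mul_of_nonneg_left hfin (by positivity)
end

section
/- If p₁, …, p_s are s distinct primes whose product is at most n (n a positive integer, s ≥ 1), then the geometric mean of the numbers (1 − 1/pᵢ), i.e., (∏ᵢ (1 − 1/pᵢ))^{1/s}, is at most 1 − n^{−1/s}. -/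
open Real Finset

theorem geom_mean_one_sub_inv_primes_le (s n : ℕ) (hs : 1 ≤ s) (hn : 0 < n)
    (p : Fin s → ℕ) (hp : ∀ i, Nat.Prime (p i)) (hinj : Function.Injective p)
    (hprod : ∏ i, p i ≤ n) :
    (∏ i, (1 - 1 / (p i : ℝ))) ^ (1 / (s : ℝ)) ≤ 1 - (n : ℝ) ^ (-(1 / (s : ℝ))) := by
  have hs' : (0 : ℝ) < s := by exact_mod_cast hs
  have hppos : ∀ i, (0 : ℝ) < p i := fun i => by exact_mod_cast (hp i).pos
  have hz : ∀ i, (0 : ℝ) ≤ 1 - 1 / (p i : ℝ) := fun i => by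
    have h2 : (2 : ℝ) ≤ p i := by exact_mod_cast (hp i).two_le
    have : 1 / (p i : ℝ) ≤ 1 := by
      rw [div_le_one (hppos i)]; linarith
    linarith
  -- Step 1: AM-GM on (1 - 1/p i)
  have hw' : ∑ _i : Fin s, (1 / (s : ℝ)) = 1 := by
    simp [Finset.sum_const]
    field_simp
  have h1 : (∏ i, (1 - 1 / (p i : ℝ))) ^ (1 / (s : ℝ))
      ≤ ∑ i, (1 / (s : ℝ)) * (1 - 1 / (p i : ℝ)) := by
    rw [← Real.finset_prod_rpow _ _ (fun i _ => hz i)]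
    exact Real.geom_mean_le_arith_mean_weighted univ (fun _ => 1 / (s : ℝ)) _
      (fun i _ => by positivity) hw' (fun i _ => hz i)
  have hsum : ∑ i, (1 / (s : ℝ)) * (1 - 1 / (p i : ℝ))
      = 1 - ∑ i, (1 / (s : ℝ)) * (1 / (p i : ℝ)) := by
    simp only [mul_sub, mul_one]
    rw [Finset.sum_sub_distrib, hw']
  -- Step 2: AM-GM on 1/p i
  have h2 : (∏ i, (1 / (p i : ℝ))) ^ (1 / (s : ℝ))
      ≤ ∑ i, (1 / (s : ℝ)) * (1 / (p i : ℝ)) := by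
    rw [← Real.finset_prod_rpow _ _ (fun i _ => le_of_lt (div_pos one_pos (hppos i)))]
    exact Real.geom_mean_le_arith_mean_weighted univ (fun _ => 1 / (s : ℝ)) _
      (fun i _ => by positivity) hw' (fun i _ => le_of_lt (div_pos one_pos (hppos i)))
  -- Step 3: n^{-1/s} ≤ (∏ p i)⁻¹ ^ (1/s)
  have hprodpos : (0 : ℝ) < ∏ i, (p i : ℝ) := Finset.prod_pos fun i _ => hppos i
  have h3 : (n : ℝ) ^ (-(1 / (s : ℝ))) ≤ (∏ i, (1 / (p i : ℝ))) ^ (1 / (s : ℝ)) := by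
    have hle : (∏ i, (p i : ℝ)) ≤ (n : ℝ) := by
      exact_mod_cast hprod
    have := Real.rpow_le_rpow_of_nonpos hprodpos hle (neg_nonpos.mpr (by positivity) : -(1 / (s : ℝ)) ≤ 0)
    calc (n : ℝ) ^ (-(1 / (s : ℝ))) ≤ (∏ i, (p i : ℝ)) ^ (-(1 / (s : ℝ))) := this
      _ = (∏ i, (1 / (p i : ℝ))) ^ (1 / (s : ℝ)) := by
          rw [Real.rpow_neg hprodpos.le, ← Real.inv_rpow hprodpos.le]
          congr 1
          rw [← Finset.prod_inv_distrib]
          simp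
  linarith [h1, hsum ▸ h1, h2, h3]
end

section
/- Let Λ be a lattice of rank r in Euclidean space (a discrete subgroup generated by r linearly independent vectors), let λ_r(Λ) be its r-th successive minimum and μ(Λ) its covering radius with respect to the ℓ² norm (the supremum over points x in the real span of Λ of the distance from x to Λ). Then μ(Λ) ≤ (√r / 2)·λ_r(Λ). -/
/-!
Babai's nearest-plane rounding: a point `x` of the span of linearly independent vectors
`v₁, …, vᵣ` is approximated by an integer combination by rounding the coefficient of `vᵣ`,
then recursing on the span of the others. By Pythagoras, each step costs at most the squared
distance from `vᵢ` to the span of the previous vectors, divided by 4, hence at most `‖vᵢ‖² / 4`.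
If the `vᵢ` are lattice vectors of norm at most `R`, then for dimension reasons they span the same
space as the lattice, so every point of that space lies within `√r R / 2` of the lattice.
-/

open Real Submodule

variable {E : Type*} [NormedAddCommGroup E] [InnerProductSpace ℝ E]

lemma norm_sub_starProjection_le (W : Submodule ℝ E) [W.HasOrthogonalProjection] (u : E) :
    ‖u - W.starProjection u‖ ≤ ‖u‖ := by
  simpa [starProjection_orthogonal'] using Wᗮ.norm_starProjection_apply_le u

lemma exists_int_norm_sub_smul_sub_sq_le (W : Submodule ℝ E) [W.HasOrthogonalProjection]
    {u x : E} (hx : x ∈ W ⊔ span ℝ {u}) :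
    ∃ k : ℤ, ∃ y ∈ W, ∀ w ∈ W, ‖x - (k : ℝ) • u - w‖ ^ 2 ≤ ‖y - w‖ ^ 2 + ‖u‖ ^ 2 / 4 := by
  obtain ⟨x₀, hx₀, z, hz, rfl⟩ := mem_sup.1 hx
  obtain ⟨s, rfl⟩ := mem_span_singleton.1 hz
  set p := W.starProjection u
  set t := s - round s
  have hy : x₀ + t • p ∈ W := W.add_mem hx₀ (W.smul_mem _ (W.starProjection_apply_mem u))
  refine ⟨round s, x₀ + t • p, hy, fun w hw => ?_⟩
  have hdecomp : x₀ + s • u - (round s : ℝ) • u - w = (x₀ + t • p - w) + t • (u - p) := by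
    simp only [t, smul_sub, sub_smul]; abel
  have horth : inner ℝ (x₀ + t • p - w) (t • (u - p)) = 0 :=
    inner_right_of_mem_orthogonal (W.sub_mem hy hw)
      (Wᗮ.smul_mem _ (W.sub_starProjection_mem_orthogonal u))
  rw [hdecomp, norm_add_sq_real, horth, mul_zero, add_zero]
  gcongr
  calc ‖t • (u - p)‖ ^ 2 = |t| ^ 2 * ‖u - p‖ ^ 2 := by rw [norm_smul, mul_pow, Real.norm_eq_abs]
    _ ≤ (1 / 2) ^ 2 * ‖u‖ ^ 2 := by
        gcongr
        · exact abs_sub_round s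
        · exact norm_sub_starProjection_le W u
    _ = ‖u‖ ^ 2 / 4 := by ring

lemma exists_int_norm_sub_sum_sq_le {n : ℕ} (v : Fin n → E) {x : E}
    (hx : x ∈ span ℝ (Set.range v)) :
    ∃ c : Fin n → ℤ, ‖x - ∑ i, (c i : ℝ) • v i‖ ^ 2 ≤ (∑ i, ‖v i‖ ^ 2) / 4 := by
  induction n generalizing x with
  | zero => exact ⟨0, by simp_all⟩
  | succ n ih =>
    obtain ⟨v, u, rfl⟩ : ∃ v' u, v = Fin.snoc v' u :=
      ⟨Fin.init v, v (Fin.last n), (Fin.snoc_init_self v).symm⟩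
    rw [Fin.range_snoc, span_insert, sup_comm] at hx
    have : FiniteDimensional ℝ (span ℝ (Set.range v)) := .span_of_finite ℝ (Set.finite_range v)
    obtain ⟨k, y, hy, hk⟩ := exists_int_norm_sub_smul_sub_sq_le _ hx
    obtain ⟨c, hc⟩ := ih v hy
    refine ⟨Fin.snoc c k, ?_⟩
    have hstep := hk (∑ i, (c i : ℝ) • v i) (sum_mem fun i _ => smul_mem _ _ (subset_span ⟨i, rfl⟩))
    simp only [Fin.sum_univ_castSucc, Fin.snoc_castSucc, Fin.snoc_last]
    calc _ = ‖x - (k : ℝ) • u - ∑ i, (c i : ℝ) • v i‖ ^ 2 := by congr 2; abel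
      _ ≤ _ := hstep
      _ ≤ _ := by linarith

lemma span_range_eq_of_linearIndependent_of_forall_mem {K V ι : Type*} [DivisionRing K]
    [AddCommGroup V] [Module K V] [Fintype ι] {v b : ι → V} (hv : LinearIndependent K v)
    (hvb : ∀ i, v i ∈ span K (Set.range b)) : span K (Set.range v) = span K (Set.range b) :=
  have : FiniteDimensional K (span K (Set.range b)) := .span_of_finite K (Set.finite_range b)
  eq_of_le_of_finrank_le (span_le.2 (Set.range_subset_iff.2 hvb))
    ((finrank_range_le_card b).trans (finrank_span_eq_card hv).ge)

lemma setOf_exists_int_sum_eq_span {V ι : Type*} [AddCommGroup V] [Module ℝ V] [Fintype ι]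
    (b : ι → V) :
    {v | ∃ c : ι → ℤ, v = ∑ i, (c i : ℝ) • b i} = span ℤ (Set.range b) := by
  ext v
  simp only [Set.mem_ofPred_eq, SetLike.mem_coe, mem_span_range_iff_exists_fun,
    Int.cast_smul_eq_zsmul, eq_comm]

lemma infDist_le_sqrt_card_div_two_mul {n : ℕ} {L : Submodule ℤ E} {v : Fin n → E} {R : ℝ}
    (hvL : ∀ i, v i ∈ L) (hvR : ∀ i, ‖v i‖ ≤ R) (hR : 0 ≤ R) {x : E}
    (hx : x ∈ span ℝ (Set.range v)) :
    Metric.infDist x L ≤ √n / 2 * R := by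
  obtain ⟨c, hc⟩ := exists_int_norm_sub_sum_sq_le v hx
  have hmem : ∑ i, (c i : ℝ) • v i ∈ L := by
    simp_rw [Int.cast_smul_eq_zsmul]
    exact sum_mem fun i _ => L.smul_mem (c i) (hvL i)
  have hsq : ‖x - ∑ i, (c i : ℝ) • v i‖ ^ 2 ≤ (√n / 2 * R) ^ 2 :=
    calc _ ≤ (∑ _i : Fin n, R ^ 2) / 4 := hc.trans (by gcongr with i; exact hvR i)
      _ = (√n / 2 * R) ^ 2 := by
          rw [Finset.sum_const, Finset.card_univ, Fintype.card_fin, nsmul_eq_mul, mul_pow, div_pow,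
            sq_sqrt n.cast_nonneg]
          ring
  calc Metric.infDist x L ≤ ‖x - ∑ i, (c i : ℝ) • v i‖ :=
        (Metric.infDist_le_dist_of_mem hmem).trans_eq (dist_eq_norm _ _)
    _ ≤ √n / 2 * R := le_of_pow_le_pow_left₀ two_ne_zero (by positivity) hsq

lemma sSup_le_mul_sInf {T S : Set ℝ} {c : ℝ} (hc : 0 ≤ c) (hS : S.Nonempty)
    (hS₀ : ∀ R ∈ S, 0 ≤ R) (h : ∀ t ∈ T, ∀ R ∈ S, t ≤ c * R) : sSup T ≤ c * sInf S := by
  refine Real.sSup_le (fun t ht => ?_) (mul_nonneg hc (Real.sInf_nonneg hS₀))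
  rw [← smul_eq_mul, ← Real.sInf_smul_of_nonneg hc]
  exact le_csInf hS.smul_set (by rintro _ ⟨R, hR, rfl⟩; exact h t ht R hR)

/-- The covering radius of a rank-`r` lattice is at most `√r / 2` times its
`r`-th successive minimum. The lattice `Λ` is the set of `ℤ`-linear combinations of
`r` linearly independent vectors `b i` in Euclidean space. -/
theorem covering_radius_le_sqrt_r_div_two_mul_lambda
    (d r : ℕ) (b : Fin r → EuclideanSpace ℝ (Fin d))
    (hb : LinearIndependent ℝ b)
    (Λ : Set (EuclideanSpace ℝ (Fin d)))
    (hΛ : Λ = {v | ∃ c : Fin r → ℤ, v = ∑ i, (c i : ℝ) • b i}) :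
    sSup {t : ℝ | ∃ x ∈ Submodule.span ℝ (Set.range b), t = Metric.infDist x Λ}
      ≤ Real.sqrt r / 2 *
        sInf {R : ℝ | 0 ≤ R ∧ ∃ v : Fin r → EuclideanSpace ℝ (Fin d),
          LinearIndependent ℝ v ∧ ∀ i, v i ∈ Λ ∧ ‖v i‖ ≤ R} := by
  rw [setOf_exists_int_sum_eq_span] at hΛ
  subst hΛ
  have hb_mem : ∀ i, b i ∈ span ℤ (Set.range b) := fun i => subset_span ⟨i, rfl⟩
  refine sSup_le_mul_sInf (by positivity)
    ⟨∑ i, ‖b i‖, by positivity, b, hb, fun i => ⟨hb_mem i,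
      Finset.single_le_sum (fun j _ => norm_nonneg (b j)) (Finset.mem_univ i)⟩⟩
    (fun R hR => hR.1) ?_
  rintro _ ⟨x, hx, rfl⟩ R ⟨hR, v, hv, hvΛ⟩
  have hspan : span ℝ (Set.range v) = span ℝ (Set.range b) :=
    span_range_eq_of_linearIndependent_of_forall_mem hv
      fun i => span_le_restrictScalars ℤ ℝ _ (hvΛ i).1
  exact infDist_le_sqrt_card_div_two_mul (fun i => (hvΛ i).1) (fun i => (hvΛ i).2) hR
    (hspan ▸ hx)
end
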